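/- Let α ∈ (0,1) be irrational with best approximation denominators q_n. Define ω(θ, a, b) = Σ_{i=a}^b z_i(θ) with z_i(θ) = ±1 according to whether {θ + iα} ∈ [0,1/2) or [1/2,1), and M(θ, n) = max_{1≤ℓ≤n} ω(θ, 1, ℓ). Then for every θ and every t with q_n < t ≤ q_{n+1}, M(θ, t) ≤ M(θ, q_n) + 3⌈t/q_n⌉. -/

import Mathlib

/-- The ±1 coding of the rotation orbit: `1` if `{θ + iα} ∈ [0,1/2)`, `-1` otherwise. -/
noncomputable def zCode (α θ : ℝ) (i : ℕ) : ℤ :=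
  if Int.fract (θ + i * α) < 1 / 2 then 1 else -1

/-- The deterministic walk `ω(θ, m) = Σ_{i=1}^m z_i(θ)`. -/
noncomputable def walk (α θ : ℝ) (m : ℕ) : ℤ :=
  ∑ i ∈ Finset.Icc 1 m, zCode α θ i
/-- `M(θ, k) = max_{1 ≤ ℓ ≤ k} ω(θ, ℓ)`. -/
noncomputable def maxWalk (α θ : ℝ) (k : ℕ) : ℤ :=
  sSup {m : ℤ | ∃ ℓ, 1 ≤ ℓ ∧ ℓ ≤ k ∧ walk α θ ℓ = m}

/-- `m(θ, k) = min_{1 ≤ ℓ ≤ k} ω(θ, ℓ)`. -/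
noncomputable def minWalk (α θ : ℝ) (k : ℕ) : ℤ :=
  sInf {m : ℤ | ∃ ℓ, 1 ≤ ℓ ∧ ℓ ≤ k ∧ walk α θ ℓ = m}

/-!
If `p/q` is a continued fraction convergent of `α` and `q < q'` for the next denominator, then
`q |qα - p| < 1`. Hence the points `θ + iα`, `1 ≤ i ≤ q`, are the points `θ + ip/q`, which run
once through the points `(k + fract(qθ))/q`, `0 ≤ k < q`, mod 1 since `p` and `q` are coprime,
each moved by less than `1/q` in the direction of the sign of `qα - p`. So after relabelling every
point lies in its own window `[k/q, (k+2)/q)` mod 1, and counting the windows inside `[0, 1/2)`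
and inside `[1/2, 1)` shows that any `q` consecutive terms of the ±1 coding sum to at most 3 in
absolute value. A walk of length `ℓ ≤ t` is an initial piece of length at most `q` followed by at
most `⌈t/q⌉` such blocks.
-/
open Finset
open GenContFract (of)

namespace GenContFract

variable {K : Type*} [Field K] [LinearOrder K] [FloorRing K] (v : K)

theorem exists_int_eq_contsAux (n : ℕ) : ∃ a b : ℤ, (of v).contsAux n = ⟨a, b⟩ := by
  induction n using Nat.twoStepInduction with
  | zero => exact ⟨1, 0, by simp [zeroth_contAux_eq_one_zero]⟩
  | one => exact ⟨⌊v⌋, 1, by simp [first_contAux_eq_h_one, of_h_eq_floor]⟩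
  | more n ih₀ ih₁ =>
    obtain ⟨a₀, b₀, h₀⟩ := ih₀
    obtain ⟨a₁, b₁, h₁⟩ := ih₁
    cases hs : (of v).s.get? n with
    | none => exact ⟨a₁, b₁, by simp [contsAux, hs, h₁]⟩
    | some gp =>
      obtain ⟨ha, c, hc⟩ := of_partNum_eq_one_and_exists_int_partDen_eq hs
      exact ⟨c * a₁ + a₀, c * b₁ + b₀, by
        rw [contsAux_recurrence hs h₀ h₁, ha, hc]; push_cast; ring_nf⟩

theorem exists_int_eq_nums_dens (n : ℕ) :
    ∃ p q : ℤ, (of v).nums n = p ∧ (of v).dens n = q := by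
  obtain ⟨p, q, h⟩ := exists_int_eq_contsAux v (n + 1)
  exact ⟨p, q, by rw [num_eq_conts_a, nth_cont_eq_succ_nth_contAux, h],
    by rw [den_eq_conts_b, nth_cont_eq_succ_nth_contAux, h]⟩

theorem exists_isCoprime_nums_dens {n : ℕ} (h : ¬(of v).TerminatedAt n) :
    ∃ p q : ℤ, (of v).nums n = p ∧ (of v).dens n = q ∧ IsCoprime p q := by
  obtain ⟨p, q, hp, hq⟩ := exists_int_eq_nums_dens v n
  obtain ⟨p', q', hp', hq'⟩ := exists_int_eq_nums_dens v (n + 1)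
  have hdet : p * q' - q * p' = (-1) ^ (n + 1) := by
    have := SimpContFract.determinant (s := SimpContFract.of v) h
    rw [SimpContFract.of, hp, hq, hp', hq'] at this
    exact_mod_cast this
  have hsq : ((-1 : ℤ) ^ (n + 1)) * (-1) ^ (n + 1) = 1 := by
    rw [← mul_pow]; norm_num
  exact ⟨p, q, hp, hq, (-1) ^ (n + 1) * q', -(-1) ^ (n + 1) * p', by
    linear_combination (-1) ^ (n + 1) * hdet + hsq⟩

variable [IsStrictOrderedRing K]

theorem one_le_dens (n : ℕ) : 1 ≤ (of v).dens n := by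
  induction n with
  | zero => rw [zeroth_den_eq_one]
  | succ n ih => exact ih.trans of_den_mono

end GenContFract

theorem Irrational.exists_isCoprime_mul_abs_mul_sub_lt {v : ℝ} (hv : Irrational v)
    {n q q' : ℕ} (hq : (q : ℝ) = (of v).dens n) (hq' : (q' : ℝ) = (of v).dens (n + 1))
    (hlt : q < q') : ∃ p : ℤ, IsCoprime p q ∧ q * |q * v - p| < 1 := by
  have hterm : ¬(of v).TerminatedAt n := fun h => by
    obtain ⟨r, hr⟩ := GenContFract.exists_rat_eq_of_terminates ⟨n, h⟩
    exact hv.ne_rat r hr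
  obtain ⟨p, d, hp, hd, hpd⟩ := GenContFract.exists_isCoprime_nums_dens v hterm
  have hdq : d = q := by exact_mod_cast hd.symm.trans hq.symm
  subst hdq
  have hq0 : (0 : ℝ) < q := hq ▸ one_pos.trans_le (GenContFract.one_le_dens v n)
  have happrox := GenContFract.abs_sub_convs_le hterm
  rw [GenContFract.conv_eq_num_div_den, hp, hd, ← hq', Int.cast_natCast] at happrox
  have hq'0 : (0 : ℝ) < q' := hq0.trans (by exact_mod_cast hlt)
  refine ⟨p, hpd, ?_⟩
  calc (q : ℝ) * |q * v - p| = q ^ 2 * |v - p / q| := by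
        rw [show (q : ℝ) * v - p = q * (v - p / q) by field_simp, abs_mul, abs_of_pos hq0]; ring
    _ ≤ q ^ 2 * (1 / (q * q')) := by gcongr
    _ = q / q' := by field_simp
    _ < 1 := (div_lt_one hq'0).mpr (by exact_mod_cast hlt)

noncomputable def halfSign (x : ℝ) : ℤ := if Int.fract x < 1 / 2 then 1 else -1

theorem zCode_eq_halfSign (α θ : ℝ) (i : ℕ) : zCode α θ i = halfSign (θ + i * α) := rfl

theorem neg_one_le_halfSign (x : ℝ) : -1 ≤ halfSign x := by
  unfold halfSign; split <;> norm_num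

theorem halfSign_le_one (x : ℝ) : halfSign x ≤ 1 := by
  unfold halfSign; split <;> norm_num

section Slot

variable {x : ℝ} {q k : ℕ} {m : ℤ}

theorem halfSign_eq_one_of_slot (hk : (k : ℝ) ≤ q * (x - m)) (hk' : q * (x - m) < k + 2)
    (h : 2 * k + 4 ≤ q) : halfSign x = 1 := by
  have hq : (2 * k + 4 : ℝ) ≤ q := by exact_mod_cast h
  have h₀ : (m : ℝ) ≤ x := by nlinarith
  have h₁ : x < m + 1 / 2 := by nlinarith
  have hfract : Int.fract x = x - m := Int.fract_eq_iff.mpr ⟨by linarith, by linarith, m, by ring⟩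
  rw [halfSign, hfract, if_pos (by linarith)]

theorem halfSign_eq_neg_one_of_slot (hk : (k : ℝ) ≤ q * (x - m)) (hk' : q * (x - m) < k + 2)
    (h : q ≤ 2 * k) (h' : k + 2 ≤ q) : halfSign x = -1 := by
  have hq : (q : ℝ) ≤ 2 * k := by exact_mod_cast h
  have hq' : (k + 2 : ℝ) ≤ q := by exact_mod_cast h'
  have h₀ : (m : ℝ) + 1 / 2 ≤ x := by nlinarith
  have h₁ : x < m + 1 := by nlinarith
  have hfract : Int.fract x = x - m := Int.fract_eq_iff.mpr ⟨by linarith, by linarith, m, by ring⟩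
  rw [halfSign, hfract, if_neg (by linarith)]

end Slot

theorem two_mul_card_sub_card_le_sum {ι : Type*} {s t : Finset ι} (f : ι → ℤ) (hts : t ⊆ s)
    (hf : ∀ i ∈ s, -1 ≤ f i) (ht : ∀ i ∈ t, f i = 1) : 2 * (#t : ℤ) - #s ≤ ∑ i ∈ s, f i := by
  calc 2 * (#t : ℤ) - #s = ∑ i ∈ t, (f i + 1) - #s := by
        rw [sum_congr rfl fun i hi => by rw [ht i hi]]; simp; ring
    _ ≤ ∑ i ∈ s, (f i + 1) - #s := by
        gcongr
        exact fun i hi _ => by linarith [hf i hi]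
    _ = ∑ i ∈ s, f i := by simp [sum_add_distrib]

theorem card_filter_comp_eq_card_filter_range {ι : Type*} {s : Finset ι} {r : ι → ℕ} {q : ℕ}
    (hcard : #s = q) (hr : ∀ i ∈ s, r i < q) (hinj : Set.InjOn r s) (P : ℕ → Prop)
    [DecidablePred P] : #(s.filter fun i => P (r i)) = #((range q).filter P) := by
  have himage : s.image r = range q := by
    refine eq_of_subset_of_card_le (fun k hk => ?_) ?_
    · obtain ⟨i, hi, rfl⟩ := mem_image.mp hk
      exact mem_range.mpr (hr i hi)
    · rw [card_range, card_image_of_injOn hinj, hcard]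
  rw [← himage, filter_image, card_image_of_injOn (hinj.mono (filter_subset _ s))]

theorem abs_sum_halfSign_le_three {ι : Type*} (s : Finset ι) (y : ι → ℝ) (r : ι → ℕ)
    (m : ι → ℤ) (q : ℕ) (hcard : #s = q) (hr : ∀ i ∈ s, r i < q) (hinj : Set.InjOn r s)
    (hy : ∀ i ∈ s, (r i : ℝ) ≤ q * (y i - m i) ∧ q * (y i - m i) < r i + 2) :
    |∑ i ∈ s, halfSign (y i)| ≤ 3 := by
  have hlow := two_mul_card_sub_card_le_sum (fun i => halfSign (y i))
    (filter_subset (fun i => 2 * r i + 4 ≤ q) s) (fun i _ => neg_one_le_halfSign _)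
    fun i hi => by
      obtain ⟨hi, hP⟩ := mem_filter.mp hi
      exact halfSign_eq_one_of_slot (hy i hi).1 (hy i hi).2 hP
  have hup := two_mul_card_sub_card_le_sum (fun i => -halfSign (y i))
    (filter_subset (fun i => q ≤ 2 * r i ∧ r i + 2 ≤ q) s)
    (fun i _ => by linarith [halfSign_le_one (y i)])
    fun i hi => by
      obtain ⟨hi, hP₁, hP₂⟩ := mem_filter.mp hi
      rw [halfSign_eq_neg_one_of_slot (hy i hi).1 (hy i hi).2 hP₁ hP₂, neg_neg]
  have hL : (range q).filter (fun k => 2 * k + 4 ≤ q) = range ((q - 2) / 2) := by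
    ext k; simp only [mem_filter, mem_range]; omega
  have hU : (range q).filter (fun k => q ≤ 2 * k ∧ k + 2 ≤ q) = Ico ((q + 1) / 2) (q - 1) := by
    ext k; simp only [mem_filter, mem_range, mem_Ico]; omega
  rw [card_filter_comp_eq_card_filter_range hcard hr hinj (fun k => 2 * k + 4 ≤ q), hL,
    card_range, hcard] at hlow
  rw [card_filter_comp_eq_card_filter_range hcard hr hinj (fun k => q ≤ 2 * k ∧ k + 2 ≤ q), hU,
    Nat.card_Ico, hcard, sum_neg_distrib] at hup
  rw [abs_le]; constructor <;> omega

theorem abs_sum_zCode_le_three (α θ : ℝ) {p : ℤ} {q : ℕ} (hpq : IsCoprime p q)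
    (happ : q * |q * α - p| < 1) : |∑ i ∈ Icc 1 q, zCode α θ i| ≤ 3 := by
  rcases q.eq_zero_or_pos with rfl | hq
  · simp
  set δ := (q : ℝ) * α - p
  set κ : ℕ → ℤ := fun i => ⌊q * θ⌋ + i * p + if 0 ≤ δ then 0 else -1
  -- `q (θ + i α) = ⌊q θ⌋ + i p + fract (q θ) + i δ`, and `|i δ| < 1` has the sign of `δ`
  have hslot : ∀ i ∈ Icc 1 q, (κ i : ℝ) ≤ q * (θ + i * α) ∧ q * (θ + i * α) < κ i + 2 := by
    intro i hi
    have hiq : (i : ℝ) ≤ q := by exact_mod_cast (mem_Icc.mp hi).2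
    have hiδ : |i * δ| < 1 := by
      rw [abs_mul, Nat.abs_cast]
      exact lt_of_le_of_lt (by gcongr) happ
    have hdecomp : (q : ℝ) * (θ + i * α) = ⌊q * θ⌋ + i * p + Int.fract (q * θ) + i * δ := by
      rw [Int.fract]; ring
    have := Int.fract_nonneg ((q : ℝ) * θ)
    have := Int.fract_lt_one ((q : ℝ) * θ)
    obtain ⟨h₁, h₂⟩ := abs_lt.mp hiδ
    simp only [κ]
    split_ifs with hδ
    · have : 0 ≤ (i : ℝ) * δ := by positivity
      push_cast; constructor <;> linarith
    · have : (i : ℝ) * δ ≤ 0 := mul_nonpos_of_nonneg_of_nonpos (by positivity) (by linarith)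
      push_cast; constructor <;> linarith
  have hκ : ∀ i, q * (κ i / q) + ((κ i % q).toNat : ℤ) = κ i := fun i => by
    rw [Int.toNat_of_nonneg (Int.emod_nonneg _ (by omega)), Int.mul_ediv_add_emod]
  simp only [zCode_eq_halfSign]
  refine abs_sum_halfSign_le_three (Icc 1 q) (fun i => θ + i * α) (fun i => (κ i % q).toNat)
    (fun i => κ i / q) q (by simp) (fun i _ => ?_) (fun i hi j hj hij => ?_) (fun i hi => ?_)
  · have := Int.emod_lt_of_pos (κ i) (by omega : (0 : ℤ) < q)
    omega
  · have hmod : κ i % q = κ j % q := by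
      have := Int.emod_nonneg (κ i) (by omega : (q : ℤ) ≠ 0)
      have := Int.emod_nonneg (κ j) (by omega : (q : ℤ) ≠ 0)
      simp only at hij
      omega
    have hdiff : κ j - κ i = (j - i : ℤ) * p := by simp only [κ]; ring
    have hdvd : (q : ℤ) ∣ (j - i : ℤ) :=
      hpq.symm.dvd_of_dvd_mul_right (hdiff ▸ Int.ModEq.dvd hmod)
    have hi := mem_Icc.mp hi
    have hj := mem_Icc.mp hj
    have := Int.eq_zero_of_abs_lt_dvd hdvd (by rw [abs_lt]; omega)
    omega
  · have hκ' := congrArg (Int.cast : ℤ → ℝ) (hκ i)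
    push_cast at hκ'
    obtain ⟨h₁, h₂⟩ := hslot i hi
    constructor <;> linarith

theorem zCode_add (α θ : ℝ) (a i : ℕ) : zCode α θ (a + i) = zCode α (θ + a * α) i := by
  simp only [zCode]; push_cast; rw [add_mul, add_assoc]

theorem walk_add (α θ : ℝ) (a b : ℕ) :
    walk α θ (a + b) = walk α θ a + ∑ i ∈ Icc 1 b, zCode α (θ + a * α) i := by
  induction b with
  | zero => simp [walk]
  | succ b ih =>
    rw [← add_assoc, walk, sum_Icc_succ_top (by omega), ← walk, ih,
      sum_Icc_succ_top (by omega), add_assoc, ← zCode_add, add_assoc]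

theorem walk_add_mul_le {α θ : ℝ} {q : ℕ} {C : ℤ}
    (hC : ∀ θ', ∑ i ∈ Icc 1 q, zCode α θ' i ≤ C) (r k : ℕ) :
    walk α θ (r + q * k) ≤ walk α θ r + C * k := by
  induction k with
  | zero => simp
  | succ k ih =>
    rw [mul_add_one, ← add_assoc, walk_add]
    push_cast
    have := hC (θ + ((r + q * k : ℕ) : ℝ) * α)
    push_cast at this
    linarith

theorem bddAbove_walk_values (α θ : ℝ) (k : ℕ) :
    BddAbove {m : ℤ | ∃ ℓ, 1 ≤ ℓ ∧ ℓ ≤ k ∧ walk α θ ℓ = m} :=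
  ((Set.finite_Icc 1 k).image (walk α θ)).bddAbove.mono <| by
    rintro _ ⟨ℓ, h₁, h₂, rfl⟩
    exact ⟨ℓ, ⟨h₁, h₂⟩, rfl⟩

section MaxWalk

variable {α θ : ℝ} {k : ℕ}

theorem walk_le_maxWalk {ℓ : ℕ} (h₁ : 1 ≤ ℓ) (h₂ : ℓ ≤ k) : walk α θ ℓ ≤ maxWalk α θ k :=
  le_csSup (bddAbove_walk_values α θ k) ⟨ℓ, h₁, h₂, rfl⟩

theorem maxWalk_le {b : ℤ} (hk : 1 ≤ k) (h : ∀ ℓ, 1 ≤ ℓ → ℓ ≤ k → walk α θ ℓ ≤ b) :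
    maxWalk α θ k ≤ b :=
  csSup_le ⟨_, 1, le_rfl, hk, rfl⟩ fun _ ⟨ℓ, h₁, h₂, hℓ⟩ => hℓ ▸ h ℓ h₁ h₂

end MaxWalk

theorem maxWalk_le_add_mul_ceil {α θ : ℝ} {q t : ℕ} {C : ℤ} (hC₀ : 0 ≤ C) (hq : 0 < q)
    (ht : 0 < t) (hC : ∀ θ', ∑ i ∈ Icc 1 q, zCode α θ' i ≤ C) :
    maxWalk α θ t ≤ maxWalk α θ q + C * ⌈(t : ℝ) / q⌉ := by
  refine maxWalk_le ht fun ℓ hℓ hℓt => ?_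
  obtain ⟨r, k, rfl, hr, hrq⟩ : ∃ r k, ℓ = r + q * k ∧ 1 ≤ r ∧ r ≤ q := by
    have := Nat.mod_add_div (ℓ - 1) q
    have := Nat.mod_lt (ℓ - 1) hq
    exact ⟨(ℓ - 1) % q + 1, (ℓ - 1) / q, by omega, by omega, by omega⟩
  have hk : (k : ℤ) ≤ ⌈(t : ℝ) / q⌉ := by
    have hkq : (k : ℝ) ≤ t / q := by
      rw [le_div_iff₀ (by positivity), mul_comm]
      exact_mod_cast (Nat.le_add_left _ r).trans hℓt
    exact_mod_cast hkq.trans (Int.le_ceil _)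
  calc walk α θ (r + q * k) ≤ walk α θ r + C * k := walk_add_mul_le hC r k
    _ ≤ maxWalk α θ q + C * ⌈(t : ℝ) / q⌉ :=
        add_le_add (walk_le_maxWalk hr hrq) (mul_le_mul_of_nonneg_left hk hC₀)

theorem maxWalk_growth_general (α : ℝ) (hα : Irrational α) (n : ℕ) (qn qn1 : ℕ)
    (hqn : (qn : ℝ) = (GenContFract.of α).dens n)
    (hqn1 : (qn1 : ℝ) = (GenContFract.of α).dens (n + 1))
    (θ : ℝ) (t : ℕ) (ht1 : qn < t) (ht2 : t ≤ qn1) :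
    maxWalk α θ t ≤ maxWalk α θ qn + 3 * ⌈(t : ℝ) / (qn : ℝ)⌉ := by
  obtain ⟨p, hpq, happ⟩ := hα.exists_isCoprime_mul_abs_mul_sub_lt hqn hqn1 (ht1.trans_le ht2)
  have hq : 0 < qn := by exact_mod_cast hqn ▸ one_pos.trans_le (GenContFract.one_le_dens α n)
  exact maxWalk_le_add_mul_ceil (by norm_num) hq (by omega)
    fun θ' => (abs_le.mp (abs_sum_zCode_le_three α θ' hpq happ)).2

/-- For `q_n < t ≤ q_{n+1}`, `M(θ, t) ≤ M(θ, q_n) + 3⌈t/q_n⌉`. -/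
theorem maxWalk_growth (α : ℝ) (hα : Irrational α)
    (hα01 : α ∈ Set.Ioo (0 : ℝ) 1) (n : ℕ) (qn qn1 : ℕ)
    (hqn : (qn : ℝ) = (GenContFract.of α).dens n)
    (hqn1 : (qn1 : ℝ) = (GenContFract.of α).dens (n + 1))
    (θ : ℝ) (t : ℕ) (ht1 : qn < t) (ht2 : t ≤ qn1) :
    maxWalk α θ t ≤ maxWalk α θ qn + 3 * ⌈(t : ℝ) / (qn : ℝ)⌉ :=
  maxWalk_growth_general α hα n qn qn1 hqn hqn1 θ t ht1 ht2
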